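/- arXiv:1801.02835 — 3 statements merged into one kernel-verified Lean document; each statement's English description precedes it below -/
import Mathlib

section
/- Let p be a prime, d ≥ 2, and let Φ be a nonzero Laurent polynomial over 𝔽_p in the first d−1 variables. Then X_d − Φ is an irreducible element of the Laurent polynomial ring R_d = 𝔽_p[X_1^{±1},…,X_d^{±1}]. -/
open AddMonoidAlgebra LaurentPolynomial

/-!
Separating the last variable identifies `R_d` with the Laurent polynomial ring `R_{d-1}[T;T⁻¹]`,
sending `X_d` to `T` and `Φ` to a nonzero constant `φ`. Since `R_{d-1}` is a domain, `X - φ` is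
prime in `R_{d-1}[X]`, and it does not divide `X`, so it stays prime in the localization
`R_{d-1}[T;T⁻¹]` of `R_{d-1}[X]` away from `X`.
-/

noncomputable section

def Fin.snocAddEquiv (M : Type*) [AddZeroClass M] (n : ℕ) :
    M × (Fin n → M) ≃+ (Fin (n + 1) → M) where
  __ := Fin.snocEquiv fun _ => M
  map_add' x y := by
    ext i
    refine Fin.lastCases ?_ (fun j => ?_) i <;> simp

theorem IsLocalization.Away.prime_algebraMap {R S : Type*} [CommRing R] [IsDomain R]
    [CommRing S] [Algebra R S] {x q : R} [IsLocalization.Away x S] (hq : Prime q)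
    (hqx : ¬q ∣ x) : Prime (algebraMap R S q) := by
  have hx : x ≠ 0 := by
    rintro rfl
    exact hqx (dvd_zero q)
  have hprime : (Ideal.span {q}).IsPrime := (Ideal.span_singleton_prime hq.ne_zero).2 hq
  have hdisj : Disjoint (Submonoid.powers x : Set R) (Ideal.span {q}) :=
    (Ideal.disjoint_powers_iff_notMem_of_isPrime x).2 (by rwa [Ideal.mem_span_singleton])
  have hmap := IsLocalization.isPrime_of_isPrime_disjoint (Submonoid.powers x) S _ hprime hdisj
  rw [Ideal.map_span, Set.image_singleton] at hmap
  have hinj := IsLocalization.injective S (powers_le_nonZeroDivisors_of_noZeroDivisors hx)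
  exact (Ideal.span_singleton_prime ((map_ne_zero_iff _ hinj).2 hq.ne_zero)).1 hmap

namespace LaurentPolynomial

theorem irreducible_T_one_sub_C {R : Type*} [CommRing R] [IsDomain R] {a : R} (ha : a ≠ 0) :
    Irreducible (T 1 - C a : R[T;T⁻¹]) := by
  have hndvd : ¬(Polynomial.X - Polynomial.C a) ∣ Polynomial.X := by
    simpa [Polynomial.dvd_iff_isRoot] using ha
  have hprime := IsLocalization.Away.prime_algebraMap (S := R[T;T⁻¹])
    (Polynomial.prime_X_sub_C a) hndvd
  simpa [algebraMap_eq_toLaurent] using hprime.irreducible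

end LaurentPolynomial

namespace AddMonoidAlgebra

variable {k : Type*} [CommRing k] {n : ℕ}

variable (k n) in
def lastLaurentEquiv : k[Fin (n + 1) → ℤ] ≃+* (k[Fin n → ℤ])[T;T⁻¹] :=
  (mapDomainRingEquiv k (Fin.snocAddEquiv ℤ n).symm).trans curryRingEquiv

@[simp]
theorem lastLaurentEquiv_single (m : Fin (n + 1) → ℤ) (r : k) :
    lastLaurentEquiv k n (single m r) = .single (m (Fin.last n)) (single (Fin.init m) r) := by
  simp [lastLaurentEquiv, Fin.snocAddEquiv]

theorem lastLaurentEquiv_single_last :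
    lastLaurentEquiv k n (single (Pi.single (Fin.last n) 1) 1) = T 1 := by
  have hinit : Fin.init (Pi.single (Fin.last n) 1 : Fin (n + 1) → ℤ) = 0 := by
    ext i
    simp [Fin.init, (Fin.castSucc_lt_last i).ne]
  rw [lastLaurentEquiv_single, Pi.single_eq_same, hinit, ← one_def]
  rfl

theorem lastLaurentEquiv_mem_range_C {Φ : k[Fin (n + 1) → ℤ]}
    (h : ∀ m ∈ Φ.coeff.support, m (Fin.last n) = 0) :
    lastLaurentEquiv k n Φ ∈ (C : k[Fin n → ℤ] →+* _).range := by
  rw [← Φ.sum_coeff_single, Finsupp.sum, map_sum]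
  refine Subring.sum_mem _ fun m hm => ⟨single (Fin.init m) (Φ.coeff m), ?_⟩
  simp [h m hm]

theorem irreducible_single_last_sub [IsDomain k] {Φ : k[Fin (n + 1) → ℤ]} (hΦ : Φ ≠ 0)
    (h : ∀ m ∈ Φ.coeff.support, m (Fin.last n) = 0) :
    Irreducible (single (Pi.single (Fin.last n) 1) 1 - Φ) := by
  obtain ⟨φ, hφ⟩ := lastLaurentEquiv_mem_range_C h
  have hφ0 : φ ≠ 0 := by
    rintro rfl
    exact hΦ ((lastLaurentEquiv k n).map_eq_zero_iff.1 (by rw [← hφ, map_zero]))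
  rw [← MulEquiv.irreducible_iff (lastLaurentEquiv k n), map_sub, lastLaurentEquiv_single_last,
    ← hφ]
  exact irreducible_T_one_sub_C hφ0

end AddMonoidAlgebra

end

/-- Let `p` be a prime, `d ≥ 2`, and let `Φ` be a nonzero Laurent polynomial
over `𝔽_p` in the first `d−1` variables (i.e. an element of the Laurent polynomial ring
`R_d = AddMonoidAlgebra (ZMod p) (Fin d → ℤ)` whose support is contained in `ℤ^{d−1} × {0}`).
Then `X_d − Φ` is irreducible in `R_d`, where `X_d` is the monomial with exponent
`e_d = (0,…,0,1)`. -/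
theorem Xd_sub_Phi_irreducible (p : ℕ) [Fact p.Prime] (d : ℕ) (hd : 2 ≤ d)
    (Φ : AddMonoidAlgebra (ZMod p) (Fin d → ℤ)) (hΦ : Φ ≠ 0)
    (hsupp : ∀ m ∈ Φ.coeff.support, m ⟨d - 1, by omega⟩ = 0) :
    Irreducible
      ((AddMonoidAlgebra.single (fun i : Fin d => if (i : ℕ) = d - 1 then (1 : ℤ) else 0)
        (1 : ZMod p)) - Φ) := by
  obtain ⟨n, rfl⟩ : ∃ n, d = n + 1 := ⟨d - 1, by omega⟩
  have he : (fun i : Fin (n + 1) => if (i : ℕ) = n + 1 - 1 then (1 : ℤ) else 0) =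
      Pi.single (Fin.last n) 1 := by
    ext i
    simp [Pi.single_apply, Fin.ext_iff]
  rw [he]
  exact irreducible_single_last_sub hΦ hsupp
end

section
/- Let Q be a Laurent polynomial over 𝔽_p in d variables with Q(0) ≠ 0. Then for every n ∈ ℕ there is no x ∈ Q^⊥ satisfying x(0) = 1 and x(p^n·m) = 0 for every nonzero m ∈ S(Q). (This is the core of the proof that the shape S(Q) is a non-mixing set for any Markov subgroup annihilated by Q.) -/
/-!
Let Laurent polynomials act on configurations `x : ℤ^d → 𝔽_p` by `(P x)(k) = Σ_m P(m) x(k + m)`;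
this is an algebra action, and `Q^⊥` is the kernel of `Q`. Over `𝔽_p` the Frobenius gives
`Q^(p^n) = Σ_m Q(m) X^(p^n m)`, so every `x ∈ Q^⊥` is also killed by this dilated polynomial.
Evaluating at `0` a point with the prescribed values leaves only the term `Q(0) · x(0) = Q(0) ≠ 0`.
-/

namespace AddMonoidAlgebra

section ShiftOperator

variable (R G : Type*) [CommSemiring R] [AddMonoid G]

def translationHom : Multiplicative G →* Module.End R (G → R) where
  toFun g := LinearMap.funLeft R R (· + g.toAdd)
  map_one' := by ext; simp
  map_mul' g h := by ext x k; simp [add_assoc]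

variable {R G}

noncomputable def shiftOperator : AddMonoidAlgebra R G →ₐ[R] Module.End R (G → R) :=
  lift R _ G (translationHom R G)

theorem shiftOperator_apply (P : AddMonoidAlgebra R G) (x : G → R) (k : G) :
    shiftOperator P x k = P.coeff.sum fun m c => c * x (k + m) := by
  simp [shiftOperator, lift_apply, Finsupp.sum, translationHom]

theorem shiftOperator_mapDomain_apply (f : G → G) (P : AddMonoidAlgebra R G) (x : G → R)
    (k : G) : shiftOperator (mapDomain f P) x k = P.coeff.sum fun m c => c * x (k + f m) := by
  rw [shiftOperator_apply, coeff_mapDomain,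
    Finsupp.sum_mapDomain_index (by simp) (by simp [add_mul])]

end ShiftOperator

variable {p : ℕ} [Fact p.Prime] {G : Type*} [AddCommMonoid G]

theorem pow_prime_pow_eq_mapDomain (P : AddMonoidAlgebra (ZMod p) G) (n : ℕ) :
    P ^ p ^ n = mapDomain ((p ^ n) • ·) P := by
  have := charP_of_injective_algebraMap' (ZMod p) (A := AddMonoidAlgebra (ZMod p) G) p
  have frobenius_eq : iterateFrobenius (AddMonoidAlgebra (ZMod p) G) p n =
      mapDomainRingHom (ZMod p) (nsmulAddMonoidHom (p ^ n)) :=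
    ringHom_ext (fun r => by simp [iterateFrobenius_def, ZMod.pow_card_pow])
      (fun m => by simp [iterateFrobenius_def])
  exact congr($frobenius_eq P)

theorem shiftOperator_mapDomain_pow_smul_eq_zero {P : AddMonoidAlgebra (ZMod p) G}
    {x : G → ZMod p} (hPx : shiftOperator P x = 0) (n : ℕ) :
    shiftOperator (mapDomain ((p ^ n) • ·) P) x = 0 := by
  obtain ⟨k, hk⟩ := Nat.exists_eq_add_one.mpr (pow_pos (Fact.out : p.Prime).pos n)
  rw [← pow_prime_pow_eq_mapDomain, map_pow, hk, pow_succ, Module.End.mul_apply, hPx, map_zero]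

end AddMonoidAlgebra

open AddMonoidAlgebra

theorem no_point_of_Qperp_with_prescribed_values_general (p : ℕ) [Fact p.Prime] (d : ℕ)
    (Q : (Fin d → ℤ) →₀ ZMod p) (hQ0 : Q 0 ≠ 0) (n : ℕ) :
    ¬ ∃ x : (Fin d → ℤ) → ZMod p,
        (∀ k : Fin d → ℤ, ∑ m ∈ Q.support, Q m * x (k + m) = 0) ∧
        x 0 = 1 ∧
        (∀ m ∈ Q.support, m ≠ 0 → x ((p ^ n : ℕ) • m) = 0) := by
  rintro ⟨x, hQx, hx0, hxQ⟩
  have hPx : shiftOperator (.ofCoeff Q) x = 0 :=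
    funext fun k => (shiftOperator_apply _ x k).trans (hQx k)
  have h := congr_fun (shiftOperator_mapDomain_pow_smul_eq_zero hPx n) 0
  rw [shiftOperator_mapDomain_apply, Finsupp.sum, Finset.sum_eq_single_of_mem 0
    (Finsupp.mem_support_iff.mpr hQ0) fun m hm hm0 => by rw [zero_add, hxQ m hm hm0, mul_zero]] at h
  rw [smul_zero, add_zero, hx0, mul_one] at h
  exact hQ0 h

/-- Let `Q` be a Laurent polynomial over `𝔽_p` in `d` variables
(a finitely supported function `Q : ℤ^d → 𝔽_p`) with `Q(0) ≠ 0`.  Then for every `n ∈ ℕ`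
there is no `x ∈ Q^⊥` satisfying `x(0) = 1` and `x(p^n·m) = 0` for every nonzero
`m ∈ S(Q)`.  Here `Q^⊥ = {x : ℤ^d → 𝔽_p | ∀ k, Σ_{m ∈ S(Q)} Q(m)·x(k+m) = 0}`. -/
theorem no_point_of_Qperp_with_prescribed_values (p : ℕ) [Fact p.Prime] (d : ℕ) (hd : 1 ≤ d)
    (Q : (Fin d → ℤ) →₀ ZMod p) (hQ0 : Q 0 ≠ 0) (n : ℕ) :
    ¬ ∃ x : (Fin d → ℤ) → ZMod p,
        (∀ k : Fin d → ℤ, ∑ m ∈ Q.support, Q m * x (k + m) = 0) ∧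
        x 0 = 1 ∧
        (∀ m ∈ Q.support, m ≠ 0 → x ((p ^ n : ℕ) • m) = 0) :=
  no_point_of_Qperp_with_prescribed_values_general p d Q hQ0 n
end

section
/- Let e ≥ 1 and let f ∈ 𝔽_p[Y_1,…,Y_e] be a nonzero polynomial. Let L be the localization of the polynomial ring 𝔽_p[Y_1,…,Y_e] at the multiplicative submonoid generated by {Y_1,…,Y_e, f}. Then the group of units Lˣ is a finitely generated (abelian) group. -/
/-!
A unit of `L = S⁻¹R` is `a / s` with `s ∈ S`, and then `a` itself becomes a unit in `L`.
So `Lˣ` is a quotient of `M × M`, where `M` is the monoid of elements of `R` that become units,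
i.e. the divisors of elements of `S`. When `R` is a UFD and `S` is generated by a finite set `s`
of nonzero elements, `M` is generated by `Rˣ` and the prime factors of the elements of `s`.
For `R = 𝔽_p[Y_1, …, Y_e]` the units are the finitely many nonzero constants.
-/

open MvPolynomial UniqueFactorizationMonoid
open scoped nonZeroDivisors

theorem Prime.exists_mem_dvd_of_dvd_mem_closure {M : Type*} [CommMonoidWithZero M] {p : M}
    (hp : Prime p) {s : Set M} {w : M} (hw : w ∈ Submonoid.closure s) (hpw : p ∣ w) :
    ∃ x ∈ s, p ∣ x := by
  induction hw using Submonoid.closure_induction with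
  | mem x hx => exact ⟨x, hx, hpw⟩
  | one => exact absurd (isUnit_of_dvd_one hpw) hp.not_isUnit
  | mul x y _ _ ihx ihy => exact (hp.dvd_or_dvd hpw).elim ihx ihy

theorem MvPolynomial.finite_units {σ K : Type*} [CommRing K] [IsReduced K] [Finite Kˣ] :
    Finite (MvPolynomial σ K)ˣ := by
  refine Finite.of_surjective (Units.map (C : K →+* MvPolynomial σ K).toMonoidHom) fun u ↦ ?_
  obtain ⟨r, hr, hu⟩ := (isUnit_iff_eq_C_of_isReduced (P := (u : MvPolynomial σ K))).mp u.isUnit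
  exact ⟨hr.unit, Units.ext hu.symm⟩

namespace IsLocalization

theorem group_fg_units_of_fg_comap_isUnit {R : Type*} [CommRing R] (S : Submonoid R)
    (L : Type*) [CommRing L] [Algebra R L] [IsLocalization S L]
    (h : ((IsUnit.submonoid L).comap (algebraMap R L)).FG) : Group.FG Lˣ := by
  set M := (IsUnit.submonoid L).comap (algebraMap R L)
  have : Monoid.FG M := (Monoid.fg_iff_submonoid_fg M).mpr h
  let φ : M →* Lˣ := IsUnit.liftRight ((algebraMap R L : R →* L).comp M.subtype) fun a ↦ a.2
  let ψ : M × M →* Lˣ := φ.comp (MonoidHom.fst M M) / φ.comp (MonoidHom.snd M M)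
  refine Group.fg_iff_monoid_fg.mpr (Monoid.fg_of_surjective ψ fun u ↦ ?_)
  obtain ⟨⟨a, s⟩, hu⟩ := mk'_surjective S (u : L)
  have ha : algebraMap R L a = u * algebraMap R L s := by rw [← hu, mk'_spec]
  have haM : a ∈ M := by
    show IsUnit (algebraMap R L a)
    rw [ha]
    exact u.isUnit.mul (map_units L s)
  exact ⟨(⟨a, haM⟩, ⟨s, map_units L s⟩), div_eq_iff_eq_mul.mpr (Units.ext ha)⟩

section UniqueFactorization

variable {R : Type*} [CommRing R] [IsDomain R] [UniqueFactorizationMonoid R] {s : Set R}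
  (L : Type*) [CommRing L] [Algebra R L] [IsLocalization (Submonoid.closure s) L]

theorem comap_isUnit_eq_mrange_units_sup_closure_factors (h0 : 0 ∉ s) :
    (IsUnit.submonoid L).comap (algebraMap R L) =
      MonoidHom.mrange (Units.coeHom R) ⊔ Submonoid.closure (⋃ x ∈ s, {q | q ∈ factors x}) := by
  set N := MonoidHom.mrange (Units.coeHom R) ⊔ Submonoid.closure (⋃ x ∈ s, {q | q ∈ factors x})
  have hunit (u : Rˣ) : (u : R) ∈ N := Submonoid.mem_sup_left ⟨u, rfl⟩
  have hprime {q : R} (hq : Prime q) {w : R} (hw : w ∈ Submonoid.closure s) (hqw : q ∣ w) :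
      q ∈ N := by
    obtain ⟨x, hx, hqx⟩ := hq.exists_mem_dvd_of_dvd_mem_closure hw hqw
    obtain ⟨r, hr, u, hqu⟩ :=
      exists_mem_factors_of_dvd (ne_of_mem_of_not_mem hx h0) hq.irreducible hqx
    have hquN : q * u ∈ N :=
      hqu ▸ Submonoid.mem_sup_right (Submonoid.subset_closure (Set.mem_biUnion hx hr))
    simpa using N.mul_mem hquN (hunit u⁻¹)
  have hS : Submonoid.closure s ≤ R⁰ := Submonoid.closure_le.mpr fun x hx ↦
    mem_nonZeroDivisors_of_ne_zero (ne_of_mem_of_not_mem hx h0)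
  refine le_antisymm (fun a ha ↦ ?_) (sup_le ?_ ?_)
  · obtain ⟨w, hw, haw⟩ := (algebraMap_isUnit_iff (Submonoid.closure s)).mp ha
    obtain ⟨u, hu⟩ := factors_prod (ne_zero_of_dvd_ne_zero (nonZeroDivisors.ne_zero (hS hw)) haw)
    rw [← hu]
    refine N.mul_mem (N.multiset_prod_mem _ fun q hq ↦ ?_) (hunit u)
    exact hprime (prime_of_factor q hq) hw ((dvd_of_mem_factors hq).trans haw)
  · rintro _ ⟨u, rfl⟩
    exact u.isUnit.map (algebraMap R L)
  · refine Submonoid.closure_le.mpr fun q hq ↦ ?_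
    obtain ⟨x, hx, hqx⟩ := Set.mem_iUnion₂.mp hq
    exact (algebraMap_isUnit_iff (Submonoid.closure s)).mpr
      ⟨x, Submonoid.subset_closure hx, dvd_of_mem_factors hqx⟩

theorem fg_comap_isUnit_of_finite [Group.FG Rˣ] (hs : s.Finite) (h0 : 0 ∉ s) :
    ((IsUnit.submonoid L).comap (algebraMap R L)).FG := by
  rw [comap_isUnit_eq_mrange_units_sup_closure_factors L h0]
  have hF : (⋃ x ∈ s, {q | q ∈ factors x}).Finite :=
    hs.biUnion fun x _ ↦ (factors x).finite_toSet
  exact ((Monoid.fg_iff_submonoid_fg _).mp inferInstance).sup ⟨hF.toFinset, by simp⟩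

end UniqueFactorization

end IsLocalization

theorem units_of_localization_fg_general (p : ℕ) [Fact p.Prime] (e : ℕ)
    (f : MvPolynomial (Fin e) (ZMod p)) (hf : f ≠ 0) :
    Group.FG
      (Localization
        (Submonoid.closure (insert f (Set.range (MvPolynomial.X (R := ZMod p) (σ := Fin e))))))ˣ := by
  set s : Set (MvPolynomial (Fin e) (ZMod p)) := insert f (Set.range X)
  have : Finite (MvPolynomial (Fin e) (ZMod p))ˣ := MvPolynomial.finite_units
  have h0 : 0 ∉ s := by
    rintro (h | ⟨i, hi⟩)
    exacts [hf h.symm, X_ne_zero i hi]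
  exact IsLocalization.group_fg_units_of_fg_comap_isUnit (Submonoid.closure s) _ <|
    IsLocalization.fg_comap_isUnit_of_finite _ ((Set.finite_range _).insert f) h0

/-- Let `e ≥ 1` and let `f ∈ 𝔽_p[Y_1,…,Y_e]` be a nonzero polynomial.
Let `L` be the localization of the polynomial ring at the multiplicative submonoid generated
by `{Y_1,…,Y_e, f}`. Then the group of units `Lˣ` is a finitely generated (abelian) group. -/
theorem units_of_localization_fg (p : ℕ) [Fact p.Prime] (e : ℕ) (he : 1 ≤ e)
    (f : MvPolynomial (Fin e) (ZMod p)) (hf : f ≠ 0) :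
    Group.FG
      (Localization
        (Submonoid.closure (insert f (Set.range (MvPolynomial.X (R := ZMod p) (σ := Fin e))))))ˣ :=
  units_of_localization_fg_general p e f hf
end
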